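/- arXiv:2301.02605 — 5 statements merged into one kernel-verified Lean document; each statement's English description precedes it below -/
import Mathlib

section
/- Let d ≥ 2 be an integer, let V : ℝⁿ → ℝ be of class C¹, and let u : (0,∞) → ℝⁿ be a radial profile for V such that u(r) converges to some point u_∞ ∈ ℝⁿ as r → +∞. Then u'(r) → 0 as r → +∞, and moreover |u'(r)|²/2 − V(u(r)) → −V(u_∞) as r → +∞. -/
open Set Filter Topology

/-!
Along a radial profile the energy `‖u'‖² / 2 - V (u)` has derivative `-((d - 1) / r) ‖u'‖² ≤ 0`,
so it is nonincreasing; as `V (u r)` converges, `u'` stays bounded, and then so does `u''` by the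
equation. A function that converges at infinity with bounded second derivative has derivative
tending to zero, since `δ u' r = u (r + δ) - u r + O(δ²)`. The energy then tends to `-V u∞`.
-/

section RealVariable

variable {E : Type*} [NormedAddCommGroup E] [NormedSpace ℝ E]

theorem norm_sub_sub_smul_le_of_norm_deriv2_le {f f' f'' : ℝ → E} {a b M : ℝ} (hab : a ≤ b)
    (hf : ∀ s ∈ Icc a b, HasDerivAt f (f' s) s) (hf' : ∀ s ∈ Icc a b, HasDerivAt f' (f'' s) s)
    (hM : ∀ s ∈ Icc a b, ‖f'' s‖ ≤ M) :
    ‖f b - f a - (b - a) • f' a‖ ≤ M * (b - a) ^ 2 := by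
  have hM0 : 0 ≤ M := (norm_nonneg _).trans (hM a ⟨le_rfl, hab⟩)
  have hf'_near : ∀ s ∈ Ico a b, ‖f' s - f' a‖ ≤ M * (b - a) := fun s hs =>
    calc ‖f' s - f' a‖ ≤ M * (s - a) :=
          norm_image_sub_le_of_norm_deriv_le_segment' (fun t ht => (hf' t ht).hasDerivWithinAt)
            (fun t ht => hM t (Ico_subset_Icc_self ht)) s (Ico_subset_Icc_self hs)
      _ ≤ M * (b - a) := by gcongr; exact hs.2.le
  have hremainder : ∀ s ∈ Icc a b, HasDerivWithinAt (fun t => f t - t • f' a)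
      (f' s - f' a) (Icc a b) s := fun s hs => by
    simpa only [one_smul] using
      ((hf s hs).fun_sub ((hasDerivAt_id' s).smul_const (f' a))).hasDerivWithinAt
  have key := norm_image_sub_le_of_norm_deriv_le_segment' hremainder hf'_near b ⟨hab, le_rfl⟩
  calc ‖f b - f a - (b - a) • f' a‖ = ‖f b - b • f' a - (f a - a • f' a)‖ := by
        rw [sub_smul]; congr 1; abel
    _ ≤ M * (b - a) * (b - a) := key
    _ = M * (b - a) ^ 2 := by ring

theorem tendsto_deriv_atTop_zero_of_norm_deriv2_le {f f' f'' : ℝ → E} {L : E} {M : ℝ}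
    (hf : ∀ᶠ s in atTop, HasDerivAt f (f' s) s) (hf' : ∀ᶠ s in atTop, HasDerivAt f' (f'' s) s)
    (hM : ∀ᶠ s in atTop, ‖f'' s‖ ≤ M) (hlim : Tendsto f atTop (𝓝 L)) :
    Tendsto f' atTop (𝓝 0) := by
  rw [NormedAddGroup.tendsto_nhds_zero]
  intro ε hε
  obtain ⟨δ, hMδ, hδ⟩ : ∃ δ, M * δ < ε / 2 ∧ 0 < δ := by
    have : Tendsto (M * ·) (𝓝[>] 0) (𝓝 0) := by
      simpa using ((continuous_const_mul M).tendsto 0).mono_left nhdsWithin_le_nhds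
    exact ((this.eventually (gt_mem_nhds (half_pos hε))).and self_mem_nhdsWithin).exists
  have hincrement : Tendsto (fun r => f (r + δ) - f r) atTop (𝓝 0) := by
    simpa using (hlim.comp (tendsto_atTop_add_const_right _ δ tendsto_id)).sub hlim
  obtain ⟨R, hR⟩ := eventually_atTop.1 (hf.and (hf'.and hM))
  filter_upwards [eventually_ge_atTop R,
    NormedAddGroup.tendsto_nhds_zero.1 hincrement (δ * (ε / 2)) (by positivity)]
    with r hr hsmall
  have htaylor : ‖f (r + δ) - f r - δ • f' r‖ ≤ M * δ ^ 2 := by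
    simpa using norm_sub_sub_smul_le_of_norm_deriv2_le (by linarith : r ≤ r + δ)
      (fun s hs => (hR s (hr.trans hs.1)).1) (fun s hs => (hR s (hr.trans hs.1)).2.1)
      (fun s hs => (hR s (hr.trans hs.1)).2.2)
  have : δ * ‖f' r‖ < δ * ε :=
    calc δ * ‖f' r‖ = ‖(f (r + δ) - f r) - (f (r + δ) - f r - δ • f' r)‖ := by
          rw [sub_sub_cancel, norm_smul, Real.norm_of_nonneg hδ.le]
      _ ≤ ‖f (r + δ) - f r‖ + ‖f (r + δ) - f r - δ • f' r‖ := norm_sub_le _ _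
      _ < δ * (ε / 2) + M * δ ^ 2 := add_lt_add_of_lt_of_le hsmall htaylor
      _ < δ * ε := by nlinarith
  exact lt_of_mul_lt_mul_left this hδ.le

theorem eventually_norm_neg_div_smul_add_le {x y : ℝ → E} {c B G : ℝ}
    (hx : ∀ᶠ r in atTop, ‖x r‖ ≤ B) (hy : ∀ᶠ r in atTop, ‖y r‖ ≤ G) :
    ∀ᶠ r in atTop, ‖-(c / r) • x r + y r‖ ≤ |c| * B + G := by
  filter_upwards [hx, hy, eventually_ge_atTop 1] with r hxr hyr hr
  have hcr : |c / r| ≤ |c| := by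
    rw [abs_div, abs_of_pos (one_pos.trans_le hr)]
    exact div_le_self (abs_nonneg c) hr
  calc ‖-(c / r) • x r + y r‖ ≤ ‖-(c / r) • x r‖ + ‖y r‖ := norm_add_le _ _
    _ = |c / r| * ‖x r‖ + ‖y r‖ := by rw [norm_smul, norm_neg, Real.norm_eq_abs]
    _ ≤ |c| * B + G := by gcongr

end RealVariable

theorem ContDiff.continuous_gradient {E : Type*} [NormedAddCommGroup E] [InnerProductSpace ℝ E]
    [CompleteSpace E] {V : E → ℝ} {k : WithTop ℕ∞} (hV : ContDiff ℝ k V) (hk : k ≠ 0) :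
    Continuous (gradient V) :=
  (InnerProductSpace.toDual ℝ E).symm.continuous.comp (hV.continuous_fderiv hk)

section RadialProfile

variable {E : Type*} [NormedAddCommGroup E] {V : E → ℝ} {u u' : ℝ → E}

noncomputable def radialEnergy (V : E → ℝ) (u u' : ℝ → E) (r : ℝ) : ℝ := ‖u' r‖ ^ 2 / 2 - V (u r)

theorem exists_eventually_norm_le_of_antitoneOn_radialEnergy
    (hE : AntitoneOn (radialEnergy V u u') (Ioi 0))
    (hV : IsBoundedUnder (· ≤ ·) atTop (fun r => V (u r))) :
    ∃ B, ∀ᶠ r in atTop, ‖u' r‖ ≤ B := by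
  obtain ⟨K, hK⟩ := hV
  have hK : ∀ᶠ r in atTop, V (u r) ≤ K := hK
  refine ⟨2 * (radialEnergy V u u' 1 + K) + 1, ?_⟩
  filter_upwards [hK, eventually_ge_atTop 1] with r hVr hr
  have hEr : radialEnergy V u u' r ≤ radialEnergy V u u' 1 :=
    hE (mem_Ioi.2 one_pos) (mem_Ioi.2 (one_pos.trans_le hr)) hr
  unfold radialEnergy at hEr ⊢
  nlinarith [sq_nonneg (‖u' r‖ - 1)]

variable [InnerProductSpace ℝ E] [CompleteSpace E] {c : ℝ}

theorem hasDerivAt_radialEnergy {r : ℝ} {a : E} (hV : DifferentiableAt ℝ V (u r))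
    (hu : HasDerivAt u (u' r) r) (hu' : HasDerivAt u' a r) :
    HasDerivAt (radialEnergy V u u') (inner ℝ (u' r) (a - gradient V (u r))) r := by
  have hVu : HasDerivAt (fun s => V (u s)) (inner ℝ (gradient V (u r)) (u' r)) r := by
    rw [inner_gradient_left]
    exact hV.hasFDerivAt.comp_hasDerivAt r hu
  refine ((hu'.norm_sq.div_const 2).fun_sub hVu).congr_deriv ?_
  rw [inner_sub_right, real_inner_comm (u' r)]
  ring

theorem radialEnergy_antitoneOn (hc : 0 ≤ c) (hV : Differentiable ℝ V)
    (hu : ∀ r, 0 < r → HasDerivAt u (u' r) r)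
    (hu' : ∀ r, 0 < r → HasDerivAt u' (-(c / r) • u' r + gradient V (u r)) r) :
    AntitoneOn (radialEnergy V u u') (Ioi 0) := by
  have hE : ∀ r, 0 < r → HasDerivAt (radialEnergy V u u') (-(c / r) * ‖u' r‖ ^ 2) r := by
    intro r hr
    convert hasDerivAt_radialEnergy (hV (u r)) (hu r hr) (hu' r hr) using 1
    rw [add_sub_cancel_right, real_inner_smul_right, real_inner_self_eq_norm_sq]
  refine antitoneOn_of_hasDerivWithinAt_nonpos (f' := fun r => -(c / r) * ‖u' r‖ ^ 2)
    (convex_Ioi 0)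
    (fun r hr => (hE r hr).continuousAt.continuousWithinAt) (fun r hr => ?_) (fun r hr => ?_)
  · rw [interior_Ioi] at hr
    exact (hE r hr).hasDerivWithinAt
  · rw [interior_Ioi] at hr
    have : 0 ≤ c / r * ‖u' r‖ ^ 2 := mul_nonneg (div_nonneg hc (le_of_lt hr)) (sq_nonneg _)
    linarith

end RadialProfile

theorem radial_profile_derivative_tendsto_zero_at_infinity_general
    {n : ℕ} {d : ℕ} (hd : 2 ≤ d)
    (V : EuclideanSpace ℝ (Fin n) → ℝ) (hV : ContDiff ℝ 1 V)
    (u u' : ℝ → EuclideanSpace ℝ (Fin n))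
    (hu : ∀ r, 0 < r → HasDerivAt u (u' r) r)
    (hu' : ∀ r, 0 < r → HasDerivAt u'
      (-(((d : ℝ) - 1) / r) • u' r + gradient V (u r)) r)
    (uinf : EuclideanSpace ℝ (Fin n))
    (hlim : Tendsto u atTop (nhds uinf)) :
    Tendsto u' atTop (nhds 0) ∧
    Tendsto (fun r => ‖u' r‖ ^ 2 / 2 - V (u r)) atTop (nhds (-V uinf)) := by
  have hc : 0 ≤ (d : ℝ) - 1 := by
    have : (2 : ℝ) ≤ d := by exact_mod_cast hd
    linarith
  have hVlim : Tendsto (fun r => V (u r)) atTop (𝓝 (V uinf)) :=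
    (hV.continuous.tendsto uinf).comp hlim
  have hgradient_lim : Tendsto (fun r => gradient V (u r)) atTop (𝓝 (gradient V uinf)) :=
    ((hV.continuous_gradient one_ne_zero).tendsto uinf).comp hlim
  obtain ⟨B, hB⟩ := exists_eventually_norm_le_of_antitoneOn_radialEnergy
    (radialEnergy_antitoneOn hc (hV.differentiable one_ne_zero) hu hu') hVlim.isBoundedUnder_le
  obtain ⟨G, hG⟩ := hgradient_lim.norm.isBoundedUnder_le
  have hu'_lim : Tendsto u' atTop (𝓝 0) :=
    tendsto_deriv_atTop_zero_of_norm_deriv2_le ((eventually_gt_atTop 0).mono hu)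
      ((eventually_gt_atTop 0).mono hu') (eventually_norm_neg_div_smul_add_le hB hG) hlim
  refine ⟨hu'_lim, ?_⟩
  simpa using ((hu'_lim.norm.pow 2).div_const 2).sub hVlim

/-- If a radial profile `u` for a `C¹` potential `V` converges to
some point `u∞` as `r → +∞`, then `u'(r) → 0` and
`‖u'(r)‖²/2 − V(u(r)) → −V(u∞)` as `r → +∞`. -/
theorem radial_profile_derivative_tendsto_zero_at_infinity
    {n : ℕ} (hn : 1 ≤ n) {d : ℕ} (hd : 2 ≤ d)
    (V : EuclideanSpace ℝ (Fin n) → ℝ) (hV : ContDiff ℝ 1 V)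
    (u u' : ℝ → EuclideanSpace ℝ (Fin n))
    (hu : ∀ r, 0 < r → HasDerivAt u (u' r) r)
    (hu' : ∀ r, 0 < r → HasDerivAt u'
      (-(((d : ℝ) - 1) / r) • u' r + gradient V (u r)) r)
    (uinf : EuclideanSpace ℝ (Fin n))
    (hlim : Tendsto u atTop (nhds uinf)) :
    Tendsto u' atTop (nhds 0) ∧
    Tendsto (fun r => ‖u' r‖ ^ 2 / 2 - V (u r)) atTop (nhds (-V uinf)) :=
  radial_profile_derivative_tendsto_zero_at_infinity_general hd V hV u u' hu hu' uinf hlim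
end

section
/- Let d ≥ 2 be an integer, let A be a symmetric positive definite linear map of ℝⁿ, and let u : (0,∞) → ℝⁿ be a C² solution of the linear system u''(r) = −((d−1)/r)·u'(r) + A·u(r) that is not identically zero. Then the function r ↦ r^{d−1}·⟨u(r), u'(r)⟩ is strictly increasing on (0,∞). -/
/-!
Along a solution, `Q(r) = r^(d-1)⟨u, u'⟩` has derivative `r^(d-1)(‖u'‖² + ⟨A u, u⟩) ≥ 0`.
This can only vanish where `u = u' = 0`, and then `(u, u')`, which solves a first-order linear
system with coefficients continuous on `(0, ∞)`, vanishes identically by Grönwall uniqueness.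
So for a nonzero solution `Q' > 0` everywhere.
-/

open Set

section

variable {E : Type*} [NormedAddCommGroup E] [NormedSpace ℝ E]

theorem eqOn_zero_of_hasDerivAt_clm_apply {L : ℝ → E →L[ℝ] E} {f : ℝ → E} {s : Set ℝ}
    {t₀ : ℝ} (hs : s.OrdConnected) (hL : ContinuousOn L s)
    (hf : ∀ t ∈ s, HasDerivAt f (L t (f t)) t) (ht₀ : t₀ ∈ s) (hf₀ : f t₀ = 0) :
    EqOn f 0 s := by
  intro t ht
  have hsub := hs.uIcc_subset ht₀ ht
  obtain ⟨C, hC⟩ := isCompact_uIcc.exists_bound_of_continuousOn (hL.mono hsub)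
  have hlip : ∀ τ ∈ uIcc t₀ t, LipschitzOnWith C.toNNReal (L τ) univ := fun τ hτ =>
    ((L τ).lipschitz.weaken (by
      simpa only [norm_toNNReal] using Real.toNNReal_le_toNNReal (hC τ hτ))).lipschitzOnWith
  have hcont : ContinuousOn f (uIcc t₀ t) :=
    HasDerivAt.continuousOn fun τ hτ => hf τ (hsub hτ)
  have hzero (τ : ℝ) : HasDerivAt (0 : ℝ → E) (L τ ((0 : ℝ → E) τ)) τ := by simp
  rcases le_total t₀ t with hle | hle
  · rw [uIcc_of_le hle] at hsub hlip hcont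
    exact ODE_solution_unique_of_mem_Icc_right (fun τ hτ => hlip τ (Ico_subset_Icc_self hτ))
      hcont (fun τ hτ => (hf τ (hsub (Ico_subset_Icc_self hτ))).hasDerivWithinAt)
      (fun _ _ => mem_univ _) continuousOn_const (fun τ _ => (hzero τ).hasDerivWithinAt)
      (fun _ _ => mem_univ _) hf₀ ⟨hle, le_rfl⟩
  · rw [uIcc_of_ge hle] at hsub hlip hcont
    exact ODE_solution_unique_of_mem_Icc_left (fun τ hτ => hlip τ (Ioc_subset_Icc_self hτ))
      hcont (fun τ hτ => (hf τ (hsub (Ioc_subset_Icc_self hτ))).hasDerivWithinAt)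
      (fun _ _ => mem_univ _) continuousOn_const (fun τ _ => (hzero τ).hasDerivWithinAt)
      (fun _ _ => mem_univ _) hf₀ ⟨le_rfl, hle⟩

theorem radial_solution_eq_zero_of_eq_zero_of_deriv_eq_zero {c : ℝ} {A : E →L[ℝ] E}
    {u u' : ℝ → E}
    (hu : ∀ r, 0 < r → HasDerivAt u (u' r) r)
    (hu' : ∀ r, 0 < r → HasDerivAt u' (-(c / r) • u' r + A (u r)) r)
    {r₀ : ℝ} (hr₀ : 0 < r₀) (hu₀ : u r₀ = 0) (hu'₀ : u' r₀ = 0) {r : ℝ} (hr : 0 < r) :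
    u r = 0 := by
  let L : ℝ → (E × E) →L[ℝ] (E × E) := fun r =>
    (ContinuousLinearMap.snd ℝ E E).prod (A ∘L ContinuousLinearMap.fst ℝ E E) -
      (c / r) • (ContinuousLinearMap.inr ℝ E E ∘L ContinuousLinearMap.snd ℝ E E)
  have hL : ContinuousOn L (Ioi 0) :=
    continuousOn_const.sub <|
      (continuousOn_const.div continuousOn_id fun _ hr => hr.ne').smul continuousOn_const
  have hsol : ∀ r ∈ Ioi (0 : ℝ), HasDerivAt (fun r => (u r, u' r)) (L r (u r, u' r)) r := by
    intro r hr
    convert (hu r hr).prodMk (hu' r hr) using 1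
    simp [L, sub_eq_neg_add, neg_smul]
  exact congrArg Prod.fst <|
    eqOn_zero_of_hasDerivAt_clm_apply ordConnected_Ioi hL hsol hr₀ (by simp [hu₀, hu'₀]) hr

end

theorem hasDerivAt_pow_mul_inner_of_radial {F : Type*} [NormedAddCommGroup F]
    [InnerProductSpace ℝ F] {k : ℕ} {A : F →ₗ[ℝ] F} {u u' : ℝ → F} {r : ℝ} (hr : r ≠ 0)
    (hu : HasDerivAt u (u' r) r) (hu' : HasDerivAt u' (-((k : ℝ) / r) • u' r + A (u r)) r) :
    HasDerivAt (fun s => s ^ k * inner ℝ (u s) (u' s))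
      (r ^ k * (‖u' r‖ ^ 2 + inner ℝ (A (u r)) (u r))) r := by
  refine ((hasDerivAt_pow k r).mul (hu.inner ℝ hu')).congr_deriv ?_
  rw [inner_add_right, real_inner_smul_right, real_inner_self_eq_norm_sq,
    real_inner_comm (A (u r))]
  rcases k with _ | k
  · simp [add_comm]
  · rw [pow_succ]
    field_simp
    push_cast
    ring

theorem linearized_radial_system_Q_strictMono_general
    {n : ℕ} {d : ℕ} (hd : 2 ≤ d)
    (A : EuclideanSpace ℝ (Fin n) →ₗ[ℝ] EuclideanSpace ℝ (Fin n))
    (hA_pos : ∀ x : EuclideanSpace ℝ (Fin n), x ≠ 0 → 0 < (inner ℝ (A x) x : ℝ))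
    (u u' : ℝ → EuclideanSpace ℝ (Fin n))
    (hu : ∀ r, 0 < r → HasDerivAt u (u' r) r)
    (hu' : ∀ r, 0 < r → HasDerivAt u'
      (-(((d : ℝ) - 1) / r) • u' r + A (u r)) r)
    (hne : ∃ r, 0 < r ∧ u r ≠ 0) :
    StrictMonoOn (fun s => s ^ (d - 1) * (inner ℝ (u s) (u' s) : ℝ)) (Ioi 0) := by
  have hk : ((d - 1 : ℕ) : ℝ) = d - 1 := by
    rw [Nat.cast_sub (by omega), Nat.cast_one]
  have hQ' (r : ℝ) (hr : 0 < r) := hasDerivAt_pow_mul_inner_of_radial hr.ne' (hu r hr)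
    (hk ▸ hu' r hr)
  have hnonzero (r : ℝ) (hr : 0 < r) : u r ≠ 0 ∨ u' r ≠ 0 := by
    obtain ⟨r₁, hr₁, hur₁⟩ := hne
    by_contra! h
    exact hur₁ <| radial_solution_eq_zero_of_eq_zero_of_deriv_eq_zero
      (A := A.toContinuousLinearMap) hu hu' hr h.1 h.2 hr₁
  refine strictMonoOn_of_deriv_pos (convex_Ioi 0)
    (fun r hr => (hQ' r hr).continuousAt.continuousWithinAt) fun r hr => ?_
  rw [interior_Ioi] at hr
  rw [(hQ' r hr).deriv]
  refine mul_pos (pow_pos hr _) ?_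
  rcases hnonzero r hr with h | h
  · exact add_pos_of_nonneg_of_pos (sq_nonneg _) (hA_pos _ h)
  · have hA_nonneg : 0 ≤ inner ℝ (A (u r)) (u r) := by
      rcases eq_or_ne (u r) 0 with h0 | h0
      · simp [h0]
      · exact (hA_pos _ h0).le
    exact add_pos_of_pos_of_nonneg (pow_pos (norm_pos_iff.2 h) 2) hA_nonneg

/-- For a symmetric positive definite linear map `A` of `ℝⁿ` and a
`C²` solution `u` of the linear system `u'' = −((d−1)/r)·u' + A·u` on `(0,∞)`
that is not identically zero, the function `r ↦ r^(d−1)·⟨u r, u' r⟩` is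
strictly increasing on `(0,∞)`. -/
theorem linearized_radial_system_Q_strictMono
    {n : ℕ} (hn : 1 ≤ n) {d : ℕ} (hd : 2 ≤ d)
    (A : EuclideanSpace ℝ (Fin n) →ₗ[ℝ] EuclideanSpace ℝ (Fin n))
    (hA_symm : LinearMap.IsSymmetric A)
    (hA_pos : ∀ x : EuclideanSpace ℝ (Fin n), x ≠ 0 → 0 < (inner ℝ (A x) x : ℝ))
    (u u' : ℝ → EuclideanSpace ℝ (Fin n))
    (hu : ∀ r, 0 < r → HasDerivAt u (u' r) r)
    (hu' : ∀ r, 0 < r → HasDerivAt u'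
      (-(((d : ℝ) - 1) / r) • u' r + A (u r)) r)
    (hne : ∃ r, 0 < r ∧ u r ≠ 0) :
    StrictMonoOn (fun s => s ^ (d - 1) * (inner ℝ (u s) (u' s) : ℝ)) (Ioi 0) :=
  linearized_radial_system_Q_strictMono_general hd A hA_pos u u' hu hu' hne
end

section
/- Let d ≥ 2 be an integer, let A be a symmetric positive definite linear map of ℝⁿ, and let u : (0,∞) → ℝⁿ be a C² solution of the linear system u''(r) = −((d−1)/r)·u'(r) + A·u(r). Assume that u is bounded on (0,1], that u'(r) → 0 as r → 0⁺, and that there exists ε > 0 such that e^{εr}·(|u(r)| + |u'(r)|) → 0 as r → +∞. Then u is identically zero. -/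
/-!
Multiplying the equation by `r^(d-1) u` shows that the flux `F(r) = r^(d-1) ⟪u, u'⟫` satisfies
`F' = r^(d-1) (‖u'‖² + ⟪A u, u⟫) ≥ 0`. Boundedness of `u` and `u' → 0` at the origin, and the
exponential decay at infinity, force `F → 0` at both ends of `(0, ∞)`; a monotone function with
equal limits at both ends is constant, so `F' ≡ 0`, and positivity of `A` gives `u ≡ 0`.
-/

open Set Filter Topology

theorem eqOn_of_monotoneOn_Ioi_of_tendsto {f : ℝ → ℝ} {a c : ℝ} (hf : MonotoneOn f (Ioi a))
    (ha : Tendsto f (𝓝[>] a) (𝓝 c)) (htop : Tendsto f atTop (𝓝 c)) :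
    EqOn f (fun _ => c) (Ioi a) := by
  intro r hr
  apply le_antisymm
  · exact ge_of_tendsto htop <| (eventually_ge_atTop r).mono fun s hs =>
      hf hr (lt_of_lt_of_le hr hs) hs
  · refine le_of_tendsto ha ?_
    filter_upwards [Ioc_mem_nhdsGT hr] with s hs using hf hs.1 hr hs.2

theorem eq_zero_of_hasDerivAt_of_nonneg_of_tendsto {f f' : ℝ → ℝ}
    (hf : ∀ r, 0 < r → HasDerivAt f (f' r) r) (hf' : ∀ r, 0 < r → 0 ≤ f' r)
    (h0 : Tendsto f (𝓝[>] 0) (𝓝 0)) (htop : Tendsto f atTop (𝓝 0)) {r : ℝ} (hr : 0 < r) :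
    f' r = 0 := by
  have hmono : MonotoneOn f (Ioi 0) := by
    refine monotoneOn_of_hasDerivWithinAt_nonneg (f' := f') (convex_Ioi 0)
      (fun x hx => (hf x hx).continuousAt.continuousWithinAt) ?_ ?_ <;> rw [interior_Ioi]
    exacts [fun x hx => (hf x hx).hasDerivWithinAt, hf']
  have hzero : f =ᶠ[𝓝 r] fun _ => 0 :=
    eventually_of_mem (Ioi_mem_nhds hr) (eqOn_of_monotoneOn_Ioi_of_tendsto hmono h0 htop)
  rw [← (hf r hr).deriv, hzero.deriv_eq, deriv_const]

section RadialFlux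

variable {E : Type*} [NormedAddCommGroup E] [InnerProductSpace ℝ E]

noncomputable def radialFlux (p : ℝ) (u u' : ℝ → E) (r : ℝ) : ℝ :=
  r ^ p * inner ℝ (u r) (u' r)

theorem hasDerivAt_radialFlux {A : E → E} {p r : ℝ} {u u' : ℝ → E} (hr : 0 < r)
    (hu : HasDerivAt u (u' r) r) (hu' : HasDerivAt u' (-(p / r) • u' r + A (u r)) r) :
    HasDerivAt (radialFlux p u u') (r ^ p * (‖u' r‖ ^ 2 + inner ℝ (A (u r)) (u r))) r := by
  refine ((Real.hasDerivAt_rpow_const (p := p) (Or.inl hr.ne')).mul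
    (hu.inner ℝ hu')).congr_deriv ?_
  rw [inner_add_right, real_inner_smul_right, real_inner_comm (u r) (A (u r)),
    real_inner_self_eq_norm_sq, Real.rpow_sub_one hr.ne']
  field_simp
  ring

theorem abs_radialFlux_le {p r : ℝ} (u u' : ℝ → E) (hr : 0 ≤ r) :
    |radialFlux p u u' r| ≤ r ^ p * (‖u r‖ * ‖u' r‖) := by
  rw [radialFlux, abs_mul, abs_of_nonneg (Real.rpow_nonneg hr p)]
  exact mul_le_mul_of_nonneg_left (abs_real_inner_le_norm _ _) (Real.rpow_nonneg hr p)

theorem tendsto_radialFlux_nhdsGT_zero {p C : ℝ} {u u' : ℝ → E} (hp : 0 ≤ p)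
    (hC : ∀ r ∈ Ioc (0 : ℝ) 1, ‖u r‖ ≤ C) (hu' : Tendsto u' (𝓝[>] 0) (𝓝 0)) :
    Tendsto (radialFlux p u u') (𝓝[>] 0) (𝓝 0) := by
  rw [tendsto_zero_iff_abs_tendsto_zero]
  have hbound : Tendsto (fun r => C * ‖u' r‖) (𝓝[>] 0) (𝓝 0) := by
    simpa using hu'.norm.const_mul C
  refine squeeze_zero' (.of_forall fun r => abs_nonneg _) ?_ hbound
  filter_upwards [Ioc_mem_nhdsGT zero_lt_one] with r ⟨hr0, hr1⟩
  calc |radialFlux p u u' r| ≤ r ^ p * (‖u r‖ * ‖u' r‖) := abs_radialFlux_le u u' hr0.le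
    _ ≤ 1 * (C * ‖u' r‖) := by
      gcongr ?_ * ?_
      · exact Real.rpow_le_one hr0.le hr1 hp
      · exact mul_le_mul_of_nonneg_right (hC r ⟨hr0, hr1⟩) (norm_nonneg _)
    _ = C * ‖u' r‖ := one_mul _

theorem tendsto_radialFlux_atTop {p ε : ℝ} {u u' : ℝ → E} (hε : 0 < ε)
    (hdecay : Tendsto (fun r => Real.exp (ε * r) * (‖u r‖ + ‖u' r‖)) atTop (𝓝 0)) :
    Tendsto (radialFlux p u u') atTop (𝓝 0) := by
  rw [tendsto_zero_iff_abs_tendsto_zero]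
  have hbound : Tendsto (fun r => r ^ p * Real.exp (-(2 * ε) * r) *
      (Real.exp (ε * r) * (‖u r‖ + ‖u' r‖)) ^ 2) atTop (𝓝 0) := by
    simpa using (tendsto_rpow_mul_exp_neg_mul_atTop_nhds_zero p (2 * ε) (by linarith)).mul
      (hdecay.pow 2)
  refine squeeze_zero' (.of_forall fun r => abs_nonneg _) ?_ hbound
  filter_upwards [eventually_ge_atTop 0] with r hr
  have hexp : Real.exp (-(2 * ε) * r) * Real.exp (ε * r) ^ 2 = 1 := by
    rw [← Real.exp_nat_mul, ← Real.exp_add]; ring_nf; exact Real.exp_zero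
  calc |radialFlux p u u' r| ≤ r ^ p * (‖u r‖ * ‖u' r‖) := abs_radialFlux_le u u' hr
    _ ≤ r ^ p * (‖u r‖ + ‖u' r‖) ^ 2 := by
      gcongr
      nlinarith [norm_nonneg (u r), norm_nonneg (u' r)]
    _ = _ := by linear_combination (-(r ^ p * (‖u r‖ + ‖u' r‖) ^ 2)) * hexp

end RadialFlux

theorem linearized_radial_system_no_nonzero_bounded_decaying_solution_general
    {n : ℕ} {d : ℕ} (hd : 2 ≤ d)
    (A : EuclideanSpace ℝ (Fin n) →ₗ[ℝ] EuclideanSpace ℝ (Fin n))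
    (hA_pos : ∀ x : EuclideanSpace ℝ (Fin n), x ≠ 0 → 0 < (inner ℝ (A x) x : ℝ))
    (u u' : ℝ → EuclideanSpace ℝ (Fin n))
    (hu : ∀ r, 0 < r → HasDerivAt u (u' r) r)
    (hu' : ∀ r, 0 < r → HasDerivAt u'
      (-(((d : ℝ) - 1) / r) • u' r + A (u r)) r)
    (hbdd : ∃ C : ℝ, ∀ r ∈ Ioc (0 : ℝ) 1, ‖u r‖ ≤ C)
    (hu'0 : Tendsto u' (nhdsWithin 0 (Ioi 0)) (nhds 0))
    (hdecay : ∃ ε > (0 : ℝ), Tendsto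
      (fun r => Real.exp (ε * r) * (‖u r‖ + ‖u' r‖)) atTop (nhds 0)) :
    ∀ r, 0 < r → u r = 0 := by
  obtain ⟨C, hC⟩ := hbdd
  obtain ⟨ε, hε, hdec⟩ := hdecay
  have hp : (0 : ℝ) ≤ d - 1 := by
    have : (2 : ℝ) ≤ d := by exact_mod_cast hd
    linarith
  have hAu_nonneg : ∀ r, 0 ≤ inner ℝ (A (u r)) (u r) := fun r => by
    rcases eq_or_ne (u r) 0 with h | h
    · simp [h]
    · exact (hA_pos _ h).le
  intro r hr
  have henergy := eq_zero_of_hasDerivAt_of_nonneg_of_tendsto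
    (fun r hr => hasDerivAt_radialFlux hr (hu r hr) (hu' r hr))
    (fun r hr => mul_nonneg (Real.rpow_nonneg hr.le _) (add_nonneg (sq_nonneg _) (hAu_nonneg r)))
    (tendsto_radialFlux_nhdsGT_zero hp hC hu'0) (tendsto_radialFlux_atTop hε hdec) hr
  by_contra hur
  exact (mul_pos (Real.rpow_pos_of_pos hr _)
    (add_pos_of_nonneg_of_pos (sq_nonneg ‖u' r‖) (hA_pos _ hur))).ne' henergy

/-- Let `A` be a symmetric positive definite linear map of `ℝⁿ`
and let `u` be a `C²` solution of the linear system
`u'' = −((d−1)/r)·u' + A·u` on `(0,∞)`. If `u` is bounded on `(0,1]`, if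
`u'(r) → 0` as `r → 0⁺`, and if `e^{εr}·(‖u r‖ + ‖u' r‖) → 0` as `r → +∞` for
some `ε > 0`, then `u` is identically zero. -/
theorem linearized_radial_system_no_nonzero_bounded_decaying_solution
    {n : ℕ} (hn : 1 ≤ n) {d : ℕ} (hd : 2 ≤ d)
    (A : EuclideanSpace ℝ (Fin n) →ₗ[ℝ] EuclideanSpace ℝ (Fin n))
    (hA_symm : LinearMap.IsSymmetric A)
    (hA_pos : ∀ x : EuclideanSpace ℝ (Fin n), x ≠ 0 → 0 < (inner ℝ (A x) x : ℝ))
    (u u' : ℝ → EuclideanSpace ℝ (Fin n))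
    (hu : ∀ r, 0 < r → HasDerivAt u (u' r) r)
    (hu' : ∀ r, 0 < r → HasDerivAt u'
      (-(((d : ℝ) - 1) / r) • u' r + A (u r)) r)
    (hbdd : ∃ C : ℝ, ∀ r ∈ Ioc (0 : ℝ) 1, ‖u r‖ ≤ C)
    (hu'0 : Tendsto u' (nhdsWithin 0 (Ioi 0)) (nhds 0))
    (hdecay : ∃ ε > (0 : ℝ), Tendsto
      (fun r => Real.exp (ε * r) * (‖u r‖ + ‖u' r‖)) atTop (nhds 0)) :
    ∀ r, 0 < r → u r = 0 :=
  linearized_radial_system_no_nonzero_bounded_decaying_solution_general hd A hA_pos u u' hu hu' hbdd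
    hu'0 hdecay
end

section
/- Let d ≥ 2 be an integer, let V : ℝⁿ → ℝ be of class C², and let u : (0,∞) → ℝⁿ be a radial profile for V such that u(r) → u₀ ∈ ℝⁿ and u'(r) → 0 as r → 0⁺. If ∇V(u₀) = 0, then u(r) = u₀ for every r > 0. -/
/-!
Near the equilibrium `(u₀, 0)` of the first-order system `(u, u')`, the squared phase-space
distance `E = ‖u - u₀‖² + ‖u'‖²` satisfies `E' ≤ (L + 1) E`, where `L` is a Lipschitz constant
of `∇V` on a ball containing `u((0, b])`: the friction term `-((d - 1)/r) ‖u'‖²` has a good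
sign and `∇V(u₀) = 0` gives `‖∇V(u)‖ ≤ L ‖u - u₀‖`. Hence `E(r) e^{-(L+1) r}` is nonincreasing
on `(0, b]`; since it tends to `0` as `r → 0⁺`, it vanishes identically.
-/

open Set Filter Topology
open scoped RealInnerProductSpace

theorem ContDiff.contDiff_gradient {F : Type*} [NormedAddCommGroup F] [InnerProductSpace ℝ F]
    [CompleteSpace F] {V : F → ℝ} {m n : WithTop ℕ∞} (hV : ContDiff ℝ n V) (hmn : m + 1 ≤ n) :
    ContDiff ℝ m (gradient V) :=
  (InnerProductSpace.toDual ℝ F).symm.contDiff.comp (hV.fderiv_right hmn)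

theorem ContinuousOn.isBounded_image_Ioc_of_tendsto {X : Type*} [PseudoMetricSpace X] {f : ℝ → X}
    {a b : ℝ} {x : X} (hf : ContinuousOn f (Ioc a b)) (hlim : Tendsto f (𝓝[>] a) (𝓝 x)) :
    Bornology.IsBounded (f '' Ioc a b) := by
  obtain ⟨c, hac, hc⟩ :=
    mem_nhdsGT_iff_exists_Ioc_subset.mp (hlim (Metric.ball_mem_nhds x one_pos))
  have hIcc : Icc c b ⊆ Ioc a b := fun r hr => ⟨hac.trans_le hr.1, hr.2⟩
  refine ((Metric.isBounded_ball (x := x) (r := 1)).union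
    (isCompact_Icc.image_of_continuousOn (hf.mono hIcc)).isBounded).subset ?_
  rintro _ ⟨r, hr, rfl⟩
  rcases le_total r c with hrc | hcr
  · exact Or.inl (hc ⟨hr.1, hrc⟩)
  · exact Or.inr ⟨r, ⟨hcr, hr.2⟩, rfl⟩

theorem AntitoneOn.le_of_tendsto_nhdsGT {β : Type*} [Preorder β] [TopologicalSpace β]
    [OrderClosedTopology β] {f : ℝ → β} {a b r : ℝ} {c : β} (hf : AntitoneOn f (Ioc a b))
    (hlim : Tendsto f (𝓝[>] a) (𝓝 c)) (hr : r ∈ Ioc a b) : f r ≤ c :=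
  ge_of_tendsto hlim <| by
    filter_upwards [Ioc_mem_nhdsGT hr.1] with t ht
    exact hf ⟨ht.1, ht.2.trans hr.2⟩ hr ht.2

theorem antitoneOn_mul_exp_of_hasDerivAt_le {f f' : ℝ → ℝ} {K : ℝ} {s : Set ℝ}
    (hs : Convex ℝ s) (hf : ∀ r ∈ s, HasDerivAt f (f' r) r) (hf' : ∀ r ∈ s, f' r ≤ K * f r) :
    AntitoneOn (fun r => f r * Real.exp (-K * r)) s := by
  have hderiv : ∀ r ∈ s, HasDerivAt (fun r => f r * Real.exp (-K * r))
      ((f' r - K * f r) * Real.exp (-K * r)) r := fun r hr => by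
    have hexp : HasDerivAt (fun r => Real.exp (-K * r)) (Real.exp (-K * r) * -K) r := by
      simpa using ((hasDerivAt_id r).const_mul (-K)).exp
    exact ((hf r hr).fun_mul hexp).congr_deriv (by ring)
  refine antitoneOn_of_hasDerivWithinAt_nonpos hs
    (fun r hr => (hderiv r hr).continuousAt.continuousWithinAt)
    (fun r hr => (hderiv r (interior_subset hr)).hasDerivWithinAt) fun r hr => ?_
  exact mul_nonpos_of_nonpos_of_nonneg (sub_nonpos.mpr (hf' r (interior_subset hr)))
    (Real.exp_pos _).le

section DampedSystem

variable {E : Type*} [NormedAddCommGroup E] [InnerProductSpace ℝ E]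

theorem two_inner_add_two_inner_neg_smul_add_le {x y g : E} {α L : ℝ} (hα : 0 ≤ α)
    (hL : 0 ≤ L) (hg : ‖g‖ ≤ L * ‖x‖) :
    2 * ⟪x, y⟫ + 2 * ⟪y, -α • y + g⟫ ≤ (L + 1) * (‖x‖ ^ 2 + ‖y‖ ^ 2) := by
  have hxy : ⟪x, y⟫ ≤ ‖x‖ * ‖y‖ := real_inner_le_norm x y
  have hyg : ⟪y, g⟫ ≤ ‖y‖ * (L * ‖x‖) :=
    (real_inner_le_norm y g).trans (mul_le_mul_of_nonneg_left hg (norm_nonneg y))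
  have hyy : 0 ≤ α * ‖y‖ ^ 2 := by positivity
  have hamgm : 2 * ‖x‖ * ‖y‖ ≤ ‖x‖ ^ 2 + ‖y‖ ^ 2 := two_mul_le_add_sq _ _
  rw [inner_add_right, real_inner_smul_right, real_inner_self_eq_norm_sq]
  nlinarith

variable {u u' : ℝ → E} {a : ℝ → ℝ} {G : E → E} {u₀ : E} {L : ℝ} {s : Set ℝ}

theorem antitoneOn_energy_mul_exp (hs : Convex ℝ s) (hL : 0 ≤ L)
    (hu : ∀ r ∈ s, HasDerivAt u (u' r) r)
    (hu' : ∀ r ∈ s, HasDerivAt u' (-(a r) • u' r + G (u r)) r)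
    (ha : ∀ r ∈ s, 0 ≤ a r) (hG : ∀ r ∈ s, ‖G (u r)‖ ≤ L * ‖u r - u₀‖) :
    AntitoneOn (fun r => (‖u r - u₀‖ ^ 2 + ‖u' r‖ ^ 2) * Real.exp (-(L + 1) * r)) s :=
  antitoneOn_mul_exp_of_hasDerivAt_le hs
    (fun r hr => (((hu r hr).sub_const u₀).norm_sq).add (hu' r hr).norm_sq)
    fun r hr => two_inner_add_two_inner_neg_smul_add_le (ha r hr) hL (hG r hr)

theorem eq_of_damped_of_tendsto_nhdsGT {t₀ b : ℝ} (hL : 0 ≤ L)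
    (hu : ∀ r ∈ Ioc t₀ b, HasDerivAt u (u' r) r)
    (hu' : ∀ r ∈ Ioc t₀ b, HasDerivAt u' (-(a r) • u' r + G (u r)) r)
    (ha : ∀ r ∈ Ioc t₀ b, 0 ≤ a r) (hG : ∀ r ∈ Ioc t₀ b, ‖G (u r)‖ ≤ L * ‖u r - u₀‖)
    (hu₀ : Tendsto u (𝓝[>] t₀) (𝓝 u₀)) (hu'₀ : Tendsto u' (𝓝[>] t₀) (𝓝 0)) :
    ∀ r ∈ Ioc t₀ b, u r = u₀ := by
  intro r hr
  have hlim : Tendsto (fun r => (‖u r - u₀‖ ^ 2 + ‖u' r‖ ^ 2) * Real.exp (-(L + 1) * r))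
      (𝓝[>] t₀) (𝓝 0) := by
    have hdist : Tendsto (fun r => ‖u r - u₀‖ ^ 2 + ‖u' r‖ ^ 2) (𝓝[>] t₀) (𝓝 0) := by
      simpa using ((tendsto_sub_nhds_zero_iff.mpr hu₀).norm.pow 2).add (hu'₀.norm.pow 2)
    simpa using hdist.mul (((Real.continuous_exp.comp (continuous_const_mul _)).tendsto t₀).mono_left
      nhdsWithin_le_nhds)
  have hr0 := (antitoneOn_energy_mul_exp (convex_Ioc t₀ b) hL hu hu' ha hG).le_of_tendsto_nhdsGT
    hlim hr
  have henergy : ‖u r - u₀‖ ^ 2 + ‖u' r‖ ^ 2 ≤ 0 :=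
    nonpos_of_mul_nonpos_left hr0 (Real.exp_pos _)
  have : ‖u r - u₀‖ = 0 := by nlinarith [norm_nonneg (u r - u₀), sq_nonneg ‖u' r‖]
  exact sub_eq_zero.mp (norm_eq_zero.mp this)

end DampedSystem

theorem radial_profile_constant_iff_critical_at_origin_general
    {n : ℕ} {d : ℕ} (hd : 2 ≤ d)
    (V : EuclideanSpace ℝ (Fin n) → ℝ) (hV : ContDiff ℝ 2 V)
    (u u' : ℝ → EuclideanSpace ℝ (Fin n))
    (hu : ∀ r, 0 < r → HasDerivAt u (u' r) r)
    (hu' : ∀ r, 0 < r → HasDerivAt u'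
      (-(((d : ℝ) - 1) / r) • u' r + gradient V (u r)) r)
    (u₀ : EuclideanSpace ℝ (Fin n))
    (hu0 : Tendsto u (nhdsWithin 0 (Ioi 0)) (nhds u₀))
    (hu'0 : Tendsto u' (nhdsWithin 0 (Ioi 0)) (nhds 0))
    (hcrit : gradient V u₀ = 0) :
    ∀ r, 0 < r → u r = u₀ := by
  intro b hb
  have hcont : ContinuousOn u (Ioc 0 b) := fun r hr => (hu r hr.1).continuousAt.continuousWithinAt
  obtain ⟨R, hR⟩ := (hcont.isBounded_image_Ioc_of_tendsto hu0).subset_closedBall u₀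
  obtain ⟨L, hL⟩ := ((hV.contDiff_gradient (by norm_num)).locallyLipschitz.locallyLipschitzOn
    (s := Metric.closedBall u₀ R)).exists_lipschitzOnWith_of_compact (isCompact_closedBall u₀ R)
  have hR₀ : 0 ≤ R := dist_nonneg.trans (hR ⟨b, ⟨hb, le_rfl⟩, rfl⟩)
  have hgrad : ∀ r ∈ Ioc 0 b, ‖gradient V (u r)‖ ≤ L * ‖u r - u₀‖ := fun r hr => by
    simpa [hcrit, dist_eq_norm] using
      hL.dist_le_mul _ (hR ⟨r, hr, rfl⟩) _ (Metric.mem_closedBall_self hR₀)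
  have hdamp : ∀ r ∈ Ioc (0 : ℝ) b, 0 ≤ ((d : ℝ) - 1) / r := fun r hr => by
    have : (2 : ℝ) ≤ d := by exact_mod_cast hd
    exact div_nonneg (by linarith) hr.1.le
  exact eq_of_damped_of_tendsto_nhdsGT L.coe_nonneg (fun r hr => hu r hr.1)
    (fun r hr => hu' r hr.1) hdamp hgrad hu0 hu'0 b ⟨hb, le_rfl⟩

/-- For a radial profile `u` for a `C²` potential `V` such that
`u(r) → u₀` and `u'(r) → 0` as `r → 0⁺`, if `∇V(u₀) = 0` then `u` is
identically equal to `u₀` on `(0,∞)`. -/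
theorem radial_profile_constant_iff_critical_at_origin
    {n : ℕ} (hn : 1 ≤ n) {d : ℕ} (hd : 2 ≤ d)
    (V : EuclideanSpace ℝ (Fin n) → ℝ) (hV : ContDiff ℝ 2 V)
    (u u' : ℝ → EuclideanSpace ℝ (Fin n))
    (hu : ∀ r, 0 < r → HasDerivAt u (u' r) r)
    (hu' : ∀ r, 0 < r → HasDerivAt u'
      (-(((d : ℝ) - 1) / r) • u' r + gradient V (u r)) r)
    (u₀ : EuclideanSpace ℝ (Fin n))
    (hu0 : Tendsto u (nhdsWithin 0 (Ioi 0)) (nhds u₀))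
    (hu'0 : Tendsto u' (nhdsWithin 0 (Ioi 0)) (nhds 0))
    (hcrit : gradient V u₀ = 0) :
    ∀ r, 0 < r → u r = u₀ :=
  radial_profile_constant_iff_critical_at_origin_general hd V hV u u' hu hu' u₀ hu0 hu'0 hcrit
end

section
/- Let d ≥ 2 be an integer, let V : ℝⁿ → ℝ be of class C², let I ⊆ (0,∞) be a nonempty open interval, and let u : (0,∞) → ℝⁿ be a radial profile for V. Suppose (φ, ψ) : I → ℝⁿ × ℝⁿ is a C¹ solution of the adjoint linearized system along u, and that ψ(r) = u'(r) for every r ∈ I. Then for every r ∈ I one has r·u''(r) = u'(r), or equivalently d·u'(r) = r·∇V(u(r)). -/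
open Set Filter

/-!
Put `c = d - 1`. On `I` the second adjoint equation with `ψ = u'` reads `u'' = -φ + (c/r) u'`, and
together with the profile equation this determines `φ = (2c/r) u' - ∇V(u)`. Differentiating this
formula and comparing with the first adjoint equation `φ' = -D²V(u) u'`, the Hessian terms cancel
and leave `(2c/r) u'' = (2c/r²) u'`, i.e. `r u'' = u'` since `c ≠ 0`.
-/

theorem ContDiff.gradient {E : Type*} [NormedAddCommGroup E] [InnerProductSpace ℝ E]
    [CompleteSpace E] {V : E → ℝ} {m n : WithTop ℕ∞} (hV : ContDiff ℝ n V) (hmn : m + 1 ≤ n) :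
    ContDiff ℝ m (gradient V) :=
  (InnerProductSpace.toDual ℝ E).symm.contDiff.comp (hV.fderiv_right hmn)

theorem HasDerivAt.eq_of_eqOn {F : Type*} [NormedAddCommGroup F] [NormedSpace ℝ F]
    {f g : ℝ → F} {f' g' : F} {s : Set ℝ} {x : ℝ} (hs : IsOpen s) (hx : x ∈ s)
    (hfg : EqOn f g s) (hf : HasDerivAt f f' x) (hg : HasDerivAt g g' x) : f' = g' :=
  (hf.congr_of_eventuallyEq (eventuallyEq_of_mem (hs.mem_nhds hx) hfg.symm)).unique hg

section AdjointSystem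

variable {E : Type*} [NormedAddCommGroup E] [InnerProductSpace ℝ E] [CompleteSpace E]
  {V : E → ℝ} {c : ℝ} {s : Set ℝ} {u u' u'' φ ψ : ℝ → E}

theorem adjoint_fst_eqOn (hs : IsOpen s) (hu' : ∀ r ∈ s, HasDerivAt u' (u'' r) r)
    (hprofile : ∀ r ∈ s, u'' r = -(c / r) • u' r + gradient V (u r))
    (hψ : ∀ r ∈ s, HasDerivAt ψ (-(φ r) + (c / r) • ψ r) r) (hψu : EqOn ψ u' s) :
    EqOn φ (fun r ↦ (2 * c / r) • u' r - gradient V (u r)) s := by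
  intro r hr
  have hu''_adjoint : -(φ r) + (c / r) • u' r = u'' r := by
    rw [← hψu hr]
    exact (hψ r hr).eq_of_eqOn hs hr hψu (hu' r hr)
  have hφ : φ r = (c / r) • u' r - u'' r := by
    rw [← hu''_adjoint]; abel
  rw [hφ, hprofile r hr]
  module

theorem hasDerivAt_adjoint_fst_formula {r : ℝ} (hr : r ≠ 0)
    (hV : DifferentiableAt ℝ (gradient V) (u r)) (hu : HasDerivAt u (u' r) r)
    (hu' : HasDerivAt u' (u'' r) r) :
    HasDerivAt (fun r ↦ (2 * c / r) • u' r - gradient V (u r))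
      ((2 * c / r) • u'' r - (2 * c / r ^ 2) • u' r - fderiv ℝ (gradient V) (u r) (u' r)) r := by
  have hcoeff : HasDerivAt (fun r ↦ 2 * c / r) (-(2 * c / r ^ 2)) r := by
    simpa [div_eq_mul_inv] using (hasDerivAt_inv hr).const_mul (2 * c)
  refine ((hcoeff.smul hu').sub (hV.hasFDerivAt.comp_hasDerivAt r hu)).congr_deriv ?_
  rw [neg_smul]
  abel

theorem smul_secondDeriv_eq_of_adjoint_eqOn_deriv (hc : c ≠ 0) (hs : IsOpen s)
    (hs0 : (0 : ℝ) ∉ s)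
    (hV : ∀ r ∈ s, DifferentiableAt ℝ (gradient V) (u r))
    (hu : ∀ r ∈ s, HasDerivAt u (u' r) r) (hu' : ∀ r ∈ s, HasDerivAt u' (u'' r) r)
    (hprofile : ∀ r ∈ s, u'' r = -(c / r) • u' r + gradient V (u r))
    (hφ : ∀ r ∈ s, HasDerivAt φ (-(fderiv ℝ (gradient V) (u r) (ψ r))) r)
    (hψ : ∀ r ∈ s, HasDerivAt ψ (-(φ r) + (c / r) • ψ r) r) (hψu : EqOn ψ u' s) :
    ∀ r ∈ s, r • u'' r = u' r := by
  intro r hr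
  have hr0 : r ≠ 0 := ne_of_mem_of_not_mem hr hs0
  have hderiv := (hφ r hr).eq_of_eqOn hs hr (adjoint_fst_eqOn hs hu' hprofile hψ hψu)
    (hasDerivAt_adjoint_fst_formula hr0 (hV r hr) (hu r hr) (hu' r hr))
  rw [hψu hr] at hderiv
  have hkey : (2 * c / r) • u'' r = (2 * c / r ^ 2) • u' r := by
    linear_combination (norm := module) (-1 : ℝ) • hderiv
  calc r • u'' r = (r ^ 2 / (2 * c)) • ((2 * c / r) • u'' r) := by
        rw [smul_smul]; congr 1; field_simp
    _ = u' r := by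
        rw [hkey, smul_smul, show r ^ 2 / (2 * c) * (2 * c / r ^ 2) = 1 by field_simp, one_smul]

end AdjointSystem

theorem adjoint_solution_collinear_case_ODE_general
    {n : ℕ} {d : ℕ} (hd : 2 ≤ d)
    (V : EuclideanSpace ℝ (Fin n) → ℝ) (hV : ContDiff ℝ 2 V)
    (I : Set ℝ) (hI : ∃ a b : ℝ, a < b ∧ I = Ioo a b) (hIpos : I ⊆ Ioi 0)
    (u u' u'' : ℝ → EuclideanSpace ℝ (Fin n))
    (hu : ∀ r, 0 < r → HasDerivAt u (u' r) r)
    (hu' : ∀ r, 0 < r → HasDerivAt u' (u'' r) r)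
    (heq : ∀ r, 0 < r →
      u'' r = -(((d : ℝ) - 1) / r) • u' r + gradient V (u r))
    (φ ψ : ℝ → EuclideanSpace ℝ (Fin n))
    (hφ : ∀ r ∈ I, HasDerivAt φ (-(fderiv ℝ (gradient V) (u r) (ψ r))) r)
    (hψ : ∀ r ∈ I, HasDerivAt ψ (-(φ r) + (((d : ℝ) - 1) / r) • ψ r) r)
    (hψu : ∀ r ∈ I, ψ r = u' r) :
    ∀ r ∈ I, r • u'' r = u' r ∧ (d : ℝ) • u' r = r • gradient V (u r) := by
  obtain ⟨a, b, -, rfl⟩ := hI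
  have hgrad : Differentiable ℝ (gradient V) :=
    (hV.gradient (by norm_num)).differentiable one_ne_zero
  have hd1 : (d : ℝ) - 1 ≠ 0 := by
    have : (2 : ℝ) ≤ d := by exact_mod_cast hd
    linarith
  have hcollinear := smul_secondDeriv_eq_of_adjoint_eqOn_deriv hd1 isOpen_Ioo
    (fun h ↦ lt_irrefl (0 : ℝ) (hIpos h)) (fun r _ ↦ hgrad _) (fun r hr ↦ hu r (hIpos hr))
    (fun r hr ↦ hu' r (hIpos hr)) (fun r hr ↦ heq r (hIpos hr)) hφ hψ hψu
  intro r hr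
  refine ⟨hcollinear r hr, ?_⟩
  calc (d : ℝ) • u' r = ((d : ℝ) - 1) • u' r + r • u'' r := by rw [hcollinear r hr]; module
    _ = r • gradient V (u r) := by
        rw [heq r (hIpos hr), smul_add, smul_smul, mul_neg, mul_div_cancel₀ _ (hIpos hr).ne',
          neg_smul]
        abel

/-- Let `u` be a radial profile for a `C²` potential `V` (with
first and second derivatives `u'`, `u''`), and let `(φ, ψ)` be a `C¹` solution
on a nonempty open interval `I ⊆ (0,∞)` of the adjoint linearized system
`φ' = −D²V(u)·ψ`, `ψ' = −φ + ((d−1)/r)·ψ` along `u`. If `ψ = u'` on `I`, then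
for every `r ∈ I` one has `r·u''(r) = u'(r)`, or equivalently
`d·u'(r) = r·∇V(u(r))`. -/
theorem adjoint_solution_collinear_case_ODE
    {n : ℕ} (hn : 1 ≤ n) {d : ℕ} (hd : 2 ≤ d)
    (V : EuclideanSpace ℝ (Fin n) → ℝ) (hV : ContDiff ℝ 2 V)
    (I : Set ℝ) (hI : ∃ a b : ℝ, a < b ∧ I = Ioo a b) (hIpos : I ⊆ Ioi 0)
    (u u' u'' : ℝ → EuclideanSpace ℝ (Fin n))
    (hu : ∀ r, 0 < r → HasDerivAt u (u' r) r)
    (hu' : ∀ r, 0 < r → HasDerivAt u' (u'' r) r)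
    (heq : ∀ r, 0 < r →
      u'' r = -(((d : ℝ) - 1) / r) • u' r + gradient V (u r))
    (φ ψ : ℝ → EuclideanSpace ℝ (Fin n))
    (hφ : ∀ r ∈ I, HasDerivAt φ (-(fderiv ℝ (gradient V) (u r) (ψ r))) r)
    (hψ : ∀ r ∈ I, HasDerivAt ψ (-(φ r) + (((d : ℝ) - 1) / r) • ψ r) r)
    (hψu : ∀ r ∈ I, ψ r = u' r) :
    ∀ r ∈ I, r • u'' r = u' r ∧ (d : ℝ) • u' r = r • gradient V (u r) :=
  adjoint_solution_collinear_case_ODE_general hd V hV I hI hIpos u u' u'' hu hu' heq φ ψ hφ hψ hψu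
end
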